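/- The augmented guiding vector field χ(ξ) = (f₁′(w) − k₁φ₁, f₂′(w) − k₂φ₂, 1 + k₁φ₁f₁′(w) + k₂φ₂f₂′(w)) is nonzero at every point ξ ∈ ℝ³, provided k₁, k₂ > 0; i.e., the augmented field has no singular points. -/

import Mathlib

/-!
With `a = f₁′(w)`, `b = f₂′(w)`, the cross product `∇φ₁ × ∇φ₂ = (a, b, 1)` is orthogonal to `∇φ₁`
and `∇φ₂`, so its inner product with `χ(ξ)` is `‖(a, b, 1)‖² = 1 + a² + b² > 0`.
-/

open Matrix

section
variable {R : Type*} [CommRing R]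

theorem dotProduct_augmentedField (a b x y : R) :
    ![a, b, 1] ⬝ᵥ ![a - x, b - y, 1 + x * a + y * b] = 1 + a ^ 2 + b ^ 2 := by
  simp only [dotProduct, Fin.sum_univ_three, cons_val_zero, cons_val_one, cons_val_two,
    Nat.succ_eq_add_one, Nat.reduceAdd, tail_cons, head_cons]
  ring

theorem augmentedField_ne_zero [LinearOrder R] [IsStrictOrderedRing R] (a b x y : R) :
    (![a - x, b - y, 1 + x * a + y * b] : Fin 3 → R) ≠ 0 := by
  intro h
  have h_dot := dotProduct_augmentedField a b x y
  rw [h, dotProduct_zero] at h_dot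
  have : (0 : R) < 1 + a ^ 2 + b ^ 2 := by positivity
  exact this.ne h_dot

end

theorem stmt_1_general (f₁ f₂ : ℝ → ℝ)
    (k₁ k₂ : ℝ) (px py w : ℝ) :
    (![deriv f₁ w - k₁ * (px - f₁ w),
       deriv f₂ w - k₂ * (py - f₂ w),
       1 + k₁ * (px - f₁ w) * deriv f₁ w + k₂ * (py - f₂ w) * deriv f₂ w] : Fin 3 → ℝ)
      ≠ 0 :=
  augmentedField_ne_zero (deriv f₁ w) (deriv f₂ w) (k₁ * (px - f₁ w)) (k₂ * (py - f₂ w))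

/-- The augmented guiding vector field
χ(ξ) = (f₁′(w) − k₁φ₁, f₂′(w) − k₂φ₂, 1 + k₁φ₁f₁′(w) + k₂φ₂f₂′(w)), with
φ₁ = p_x − f₁(w), φ₂ = p_y − f₂(w), is nonzero at every point, provided k₁, k₂ > 0. -/
theorem stmt_1 (f₁ f₂ : ℝ → ℝ) (hf₁ : Differentiable ℝ f₁) (hf₂ : Differentiable ℝ f₂)
    (k₁ k₂ : ℝ) (hk₁ : 0 < k₁) (hk₂ : 0 < k₂) (px py w : ℝ) :
    (![deriv f₁ w - k₁ * (px - f₁ w),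
       deriv f₂ w - k₂ * (py - f₂ w),
       1 + k₁ * (px - f₁ w) * deriv f₁ w + k₂ * (py - f₂ w) * deriv f₂ w] : Fin 3 → ℝ)
      ≠ 0 :=
  stmt_1_general f₁ f₂ k₁ k₂ px py w
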